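/- arXiv:1703.01955 — 2 statements merged into one kernel-verified Lean document; each statement's English description precedes it below -/
import Mathlib

section
/- For every n ∈ ℕ, setting m = t_2(n) (which is a nonzero integer) and n' = n + (-1)^{ν₂(m) + (m - 2^{ν₂(m)})/2^{ν₂(m)+1}}·2^{ν₂(m)+1}, one has n' ≥ 0 and t_2(n') = -t_2(n). -/
/-- The generating function `T(x) = ∑ (-1)^{s₂(n)} xⁿ = ∏ (1 - x^{2^j})`
of the Prouhet–Thue–Morse sequence. -/
noncomputable def T : PowerSeries ℤ :=
  PowerSeries.mk fun n => (-1) ^ (Nat.digits 2 n).sum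

/-- `t₂` extended to integer indices by `0` for negative indices. -/
noncomputable def t2Z (x : ℤ) : ℤ :=
  if x < 0 then 0 else PowerSeries.coeff (R := ℤ) x.toNat (T ^ 2)

/-!
Extending `t₂` by zero to negative indices, the recurrences `t₂(2x+1) = -2 t₂(x)` and
`t₂(2x) = t₂(x) + t₂(x-1)` hold for every integer `x`. They give `t₂(n) ≡ n + 1 (mod 4)` and
`t₂(4k+2) = -t₂(4k)`, which settles even `n`: the shift is `+2` when `t₂(n) ≡ 1` and `-2` when
`t₂(n) ≡ 3 (mod 4)`. For `n = 2k+1` we have `t₂(n) = -2 t₂(k)`, and replacing `m` by `-2m`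
doubles the shift (the valuation grows by one, the parity of the exponent of `-1` is unchanged),
so `n' = 2k' + 1` with `k'` the index attached to `k`, and by induction
`t₂(n') = -2 t₂(k') = 2 t₂(k) = -t₂(n)`.
-/

open Finset PowerSeries

theorem Finset.sum_range_two_mul {M : Type*} [AddCommMonoid M] (f : ℕ → M) (n : ℕ) :
    ∑ i ∈ range (2 * n), f i = ∑ a ∈ range n, (f (2 * a) + f (2 * a + 1)) := by
  induction n with
  | zero => simp
  | succ n ih => rw [mul_add_one, sum_range_succ, sum_range_succ, sum_range_succ, ih, add_assoc]

theorem coeff_T (n : ℕ) : coeff n T = (-1) ^ (Nat.digits 2 n).sum := by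
  simp [T]

theorem coeff_T_two_mul (n : ℕ) : coeff (2 * n) T = coeff n T := by
  rcases n.eq_zero_or_pos with rfl | hn
  · rfl
  rw [coeff_T, coeff_T, Nat.digits_def' one_lt_two (by omega), Nat.mul_mod_right,
    Nat.mul_div_cancel_left n two_pos, List.sum_cons, zero_add]

theorem coeff_T_two_mul_add_one (n : ℕ) : coeff (2 * n + 1) T = -coeff n T := by
  rw [coeff_T, coeff_T, Nat.digits_def' one_lt_two (by omega), Nat.mul_add_mod_self_left,
    Nat.mul_add_div two_pos, Nat.div_eq_of_lt one_lt_two, add_zero, List.sum_cons, pow_add,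
    pow_one, neg_one_mul]

theorem coeff_T_sq (N : ℕ) :
    coeff N (T ^ 2) = ∑ i ∈ range (N + 1), coeff i T * coeff (N - i) T := by
  rw [sq, coeff_mul, Nat.sum_antidiagonal_eq_sum_range_succ_mk]

theorem coeff_T_sq_two_mul_add_one (n : ℕ) :
    coeff (2 * n + 1) (T ^ 2) = -2 * coeff n (T ^ 2) := by
  rw [coeff_T_sq, coeff_T_sq, show 2 * n + 1 + 1 = 2 * (n + 1) by ring, sum_range_two_mul,
    mul_sum]
  refine sum_congr rfl fun a ha => ?_
  have ha : a ≤ n := Nat.lt_succ_iff.mp (mem_range.mp ha)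
  rw [show 2 * n + 1 - 2 * a = 2 * (n - a) + 1 by omega,
    show 2 * n + 1 - (2 * a + 1) = 2 * (n - a) by omega, coeff_T_two_mul_add_one,
    coeff_T_two_mul_add_one, coeff_T_two_mul, coeff_T_two_mul]
  ring

theorem coeff_T_sq_two_mul_add_two (n : ℕ) :
    coeff (2 * n + 2) (T ^ 2) = coeff (n + 1) (T ^ 2) + coeff n (T ^ 2) := by
  rw [coeff_T_sq, coeff_T_sq, coeff_T_sq, sum_range_succ, show 2 * n + 2 = 2 * (n + 1) by ring,
    sum_range_two_mul, sum_add_distrib, sum_range_succ _ (n + 1), Nat.sub_self, Nat.sub_self,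
    coeff_T_two_mul, add_right_comm]
  congr 1
  · congr 1
    refine sum_congr rfl fun a ha => ?_
    have ha : a ≤ n := Nat.lt_succ_iff.mp (mem_range.mp ha)
    rw [show 2 * (n + 1) - 2 * a = 2 * (n + 1 - a) by omega, coeff_T_two_mul, coeff_T_two_mul]
  · refine sum_congr rfl fun a ha => ?_
    have ha : a ≤ n := Nat.lt_succ_iff.mp (mem_range.mp ha)
    rw [show 2 * (n + 1) - (2 * a + 1) = 2 * (n - a) + 1 by omega, coeff_T_two_mul_add_one,
      coeff_T_two_mul_add_one, neg_mul_neg]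

theorem t2Z_of_neg {x : ℤ} (hx : x < 0) : t2Z x = 0 := if_pos hx

theorem t2Z_natCast (n : ℕ) : t2Z n = coeff n (T ^ 2) := by
  simp [t2Z]

theorem t2Z_zero : t2Z 0 = 1 := by
  rw [← Nat.cast_zero, t2Z_natCast, coeff_T_sq]
  simp [coeff_T]

theorem t2Z_two_mul_add_one (x : ℤ) : t2Z (2 * x + 1) = -2 * t2Z x := by
  rcases lt_or_ge x 0 with hx | hx
  · rw [t2Z_of_neg hx, t2Z_of_neg (by omega), mul_zero]
  · lift x to ℕ using hx
    exact_mod_cast coeff_T_sq_two_mul_add_one x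

theorem t2Z_two_mul (x : ℤ) : t2Z (2 * x) = t2Z x + t2Z (x - 1) := by
  rcases lt_trichotomy x 0 with hx | rfl | hx
  · rw [t2Z_of_neg hx, t2Z_of_neg (by omega), t2Z_of_neg (by omega), add_zero]
  · rw [mul_zero, zero_sub, t2Z_of_neg (x := -1) (by norm_num), add_zero]
  · obtain ⟨n, rfl⟩ : ∃ n : ℕ, x = n + 1 := ⟨x.toNat - 1, by omega⟩
    rw [add_sub_cancel_right, mul_add_one]
    exact_mod_cast coeff_T_sq_two_mul_add_two n

theorem t2Z_four_mul_add_two (x : ℤ) : t2Z (4 * x + 2) = -t2Z (4 * x) := by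
  have h₁ : t2Z (4 * x + 2) = t2Z (2 * x + 1) + t2Z (2 * x) := by
    rw [show 4 * x + 2 = 2 * (2 * x + 1) by ring, t2Z_two_mul, add_sub_cancel_right]
  have h₂ : t2Z (4 * x) = t2Z (2 * x) + t2Z (2 * x - 1) := by
    rw [show 4 * x = 2 * (2 * x) by ring, t2Z_two_mul]
  have h₃ : t2Z (2 * x - 1) = -2 * t2Z (x - 1) := by
    rw [← t2Z_two_mul_add_one]; ring_nf
  linear_combination h₁ + h₂ + h₃ + t2Z_two_mul_add_one x + 2 * t2Z_two_mul x

theorem t2Z_natCast_emod_four (n : ℕ) : t2Z n % 4 = (n + 1) % 4 := by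
  induction n using Nat.strong_induction_on with
  | _ n ih =>
  obtain ⟨k, rfl | rfl⟩ := Nat.even_or_odd' n
  · rcases k with _ | j
    · simp [t2Z_zero]
    have h₁ := ih (j + 1) (by omega)
    have h₂ := ih j (by omega)
    push_cast at h₁ h₂ ⊢
    rw [t2Z_two_mul, add_sub_cancel_right]
    omega
  · have := ih k (by omega)
    push_cast
    rw [t2Z_two_mul_add_one]
    omega

theorem t2Z_natCast_ne_zero (n : ℕ) : t2Z n ≠ 0 := by
  induction n using Nat.strong_induction_on with
  | _ n ih =>
  obtain ⟨k, rfl | rfl⟩ := Nat.even_or_odd' n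
  · have := t2Z_natCast_emod_four (2 * k)
    omega
  · push_cast
    rw [t2Z_two_mul_add_one]
    exact mul_ne_zero (by norm_num) (ih k (by omega))

theorem Int.exists_eq_two_pow_mul_odd {m : ℤ} (hm : m ≠ 0) :
    ∃ (k : ℕ) (c : ℤ), Odd c ∧ m = 2 ^ k * c := by
  have hfin : FiniteMultiplicity (2 : ℤ) m := Int.finiteMultiplicity_iff.mpr ⟨by norm_num, hm⟩
  obtain ⟨c, hc, hdvd⟩ := hfin.exists_eq_pow_mul_and_not_dvd
  exact ⟨_, c, Int.not_even_iff_odd.mp (mt even_iff_two_dvd.mp hdvd), hc⟩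

theorem padicValInt_two_pow_mul_odd (k : ℕ) {c : ℤ} (hc : Odd c) :
    padicValInt 2 (2 ^ k * c) = k := by
  obtain ⟨j, rfl⟩ := hc
  have h₂ : padicValInt 2 ((2 : ℕ) ^ k : ℕ) = k := by
    rw [padicValInt.of_nat, padicValNat.prime_pow]
  push_cast at h₂
  rw [padicValInt.mul (by positivity) (by omega), h₂, padicValInt.eq_zero_of_not_dvd (by omega),
    add_zero]

noncomputable def flipShift (m : ℤ) : ℤ :=
  (-1 : ℤ) ^ (((padicValInt 2 m : ℤ) +
    (m - 2 ^ padicValInt 2 m) / 2 ^ (padicValInt 2 m + 1)).natAbs) * 2 ^ (padicValInt 2 m + 1)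

theorem flipShift_two_pow_mul (k : ℕ) (j : ℤ) :
    flipShift (2 ^ k * (2 * j + 1)) = ((k + j : ℤ).negOnePow : ℤ) * 2 ^ (k + 1) := by
  rw [flipShift, padicValInt_two_pow_mul_odd k (odd_two_mul_add_one j),
    show 2 ^ k * (2 * j + 1) - 2 ^ k = j * 2 ^ (k + 1) by ring,
    Int.mul_ediv_cancel _ (by positivity), ← Int.coe_negOnePow ℤ, Int.cast_id]

theorem flipShift_neg_two_mul {m : ℤ} (hm : m ≠ 0) : flipShift (-2 * m) = 2 * flipShift m := by
  obtain ⟨k, _, ⟨j, rfl⟩, rfl⟩ := Int.exists_eq_two_pow_mul_odd hm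
  have hsign : ((k + 1 : ℕ) + (-j - 1) : ℤ).negOnePow = (k + j : ℤ).negOnePow := by
    rw [Int.negOnePow_eq_iff]
    exact ⟨-j, by push_cast; ring⟩
  rw [show -2 * (2 ^ k * (2 * j + 1)) = 2 ^ (k + 1) * (2 * (-j - 1) + 1) by ring,
    flipShift_two_pow_mul, flipShift_two_pow_mul, hsign]
  ring

theorem flipShift_of_emod_four_eq_one {m : ℤ} (hm : m % 4 = 1) : flipShift m = 2 := by
  obtain ⟨j, rfl⟩ : ∃ j, m = 2 ^ 0 * (2 * (2 * j) + 1) := ⟨m / 4, by omega⟩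
  rw [flipShift_two_pow_mul, Int.negOnePow_even _ ⟨j, by push_cast; ring⟩]
  rfl

theorem flipShift_of_emod_four_eq_three {m : ℤ} (hm : m % 4 = 3) : flipShift m = -2 := by
  obtain ⟨j, rfl⟩ : ∃ j, m = 2 ^ 0 * (2 * (2 * j + 1) + 1) := ⟨m / 4, by omega⟩
  rw [flipShift_two_pow_mul, Int.negOnePow_odd _ ⟨j, by push_cast; ring⟩]
  rfl

theorem t2Z_add_flipShift (n : ℕ) :
    0 ≤ n + flipShift (t2Z n) ∧ t2Z (n + flipShift (t2Z n)) = -t2Z n := by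
  induction n using Nat.strong_induction_on with
  | _ n ih =>
  obtain ⟨k, rfl | rfl⟩ := Nat.even_or_odd' n
  · have hmod := t2Z_natCast_emod_four (2 * k)
    obtain ⟨i, rfl | rfl⟩ := Nat.even_or_odd' k
    · rw [show ((2 * (2 * i) : ℕ) : ℤ) = 4 * i by push_cast; ring] at hmod ⊢
      rw [flipShift_of_emod_four_eq_one (by omega)]
      exact ⟨by positivity, t2Z_four_mul_add_two i⟩
    · rw [show ((2 * (2 * i + 1) : ℕ) : ℤ) = 4 * i + 2 by push_cast; ring] at hmod ⊢
      rw [flipShift_of_emod_four_eq_three (by omega), show 4 * (i : ℤ) + 2 + -2 = 4 * i by ring,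
        t2Z_four_mul_add_two, neg_neg]
      exact ⟨by positivity, rfl⟩
  · obtain ⟨hpos, hflip⟩ := ih k (by omega)
    push_cast
    rw [t2Z_two_mul_add_one, flipShift_neg_two_mul (t2Z_natCast_ne_zero k),
      show 2 * (k : ℤ) + 1 + 2 * flipShift (t2Z k) = 2 * (k + flipShift (t2Z k)) + 1 by ring,
      t2Z_two_mul_add_one, hflip]
    exact ⟨by omega, by ring⟩

theorem stmt18 (n : ℕ) (m : ℤ) (hm : m = PowerSeries.coeff (R := ℤ) n (T ^ 2)) :
    m ≠ 0 ∧
    ∀ n' : ℤ,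
      n' = (n : ℤ) +
          (-1 : ℤ) ^
              (((padicValInt 2 m : ℤ) +
                  (m - 2 ^ padicValInt 2 m) / 2 ^ (padicValInt 2 m + 1)).natAbs) *
            2 ^ (padicValInt 2 m + 1) →
      0 ≤ n' ∧ t2Z n' = -m := by
  rw [← t2Z_natCast] at hm
  subst hm
  refine ⟨t2Z_natCast_ne_zero n, fun n' hn' => ?_⟩
  change n' = n + flipShift (t2Z n) at hn'
  exact hn' ▸ t2Z_add_flipShift n
end

section
/- Let m ∈ ℕ₊ and n ∈ ℕ. If m > n²/log 2 (logarithm to base e), then t_m(n) ≠ 0. -/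
/-!
Since `T(x) = (1 - x) T(x²)`, the signed coefficients `u_k = (-1)^k t_m(k)` satisfy
`u_k = ∑_{2j ≤ k} (-1)^j C(m, k - 2j) u_j`. With `Q = k(k-1)m / ((m-k+1)(m-k+2))` one has
`C(m, k - 2j) C(m, j) ≤ C(m, k) Q^j / j!`, so for `Q ≤ 3/4` the sum is dominated by its first
two terms, `C(m, k) - m C(m, k - 2) ≥ (1 - Q) C(m, k)`, and strong induction on `k` gives
`0 < u_k ≤ 2 C(m, k)`. Finally `n² < m log 2 < 7m/10` forces `Q ≤ 3/4` at `k = n`.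
-/

open PowerSeries Finset Nat

lemma T_eq_one_sub_X_mul_expand : T = (1 - X) * expand 2 two_ne_zero T := by
  ext k
  rw [sub_mul, one_mul, map_sub]
  obtain ⟨j, rfl | rfl⟩ := Nat.even_or_odd' k
  · rcases j with _ | j
    · simp [T]
    · have h : 2 * (j + 1) = 2 * j + 1 + 1 := by ring
      rw [coeff_expand_mul, h, coeff_succ_X_mul, coeff_expand_of_not_dvd _ _ _ (by omega), ← h]
      simp [T]
  · rw [coeff_succ_X_mul, coeff_expand_mul, coeff_expand_of_not_dvd _ _ _ (by omega)]
    simp [T, show (2 * j + 1) / 2 = j by omega, pow_add]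

lemma coeff_one_sub_X_pow (m k : ℕ) :
    coeff k ((1 - X : ℤ⟦X⟧) ^ m) = (-1) ^ k * m.choose k := by
  have : (1 - X : ℤ⟦X⟧) ^ m = rescale (-1) (((1 + Polynomial.X) ^ m : Polynomial ℤ) : ℤ⟦X⟧) := by
    simp [sub_eq_add_neg]
  rw [this, coeff_rescale, Polynomial.coeff_coe, Polynomial.coeff_one_add_X_pow]

lemma sum_range_ite_two_dvd {M : Type*} [AddCommMonoid M] (f : ℕ → M) (k : ℕ) :
    ∑ b ∈ range (k + 1), (if 2 ∣ b then f (b / 2) else 0) = ∑ j ∈ range (k / 2 + 1), f j := by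
  rw [← sum_filter]
  have : (range (k + 1)).filter (2 ∣ ·) =
      (range (k / 2 + 1)).map ⟨(2 * ·), mul_right_injective₀ two_ne_zero⟩ := by
    ext b
    simp only [mem_filter, mem_range, mem_map, Function.Embedding.coeFn_mk]
    constructor
    · rintro ⟨hb, j, rfl⟩
      exact ⟨j, by omega, rfl⟩
    · rintro ⟨j, hj, rfl⟩
      exact ⟨by omega, dvd_mul_right 2 j⟩
  rw [this, sum_map]
  simp

noncomputable def altCoeff (m k : ℕ) : ℤ := (-1) ^ k * coeff k (T ^ m)

lemma coeff_T_pow_eq_neg_one_pow_mul (m k : ℕ) : coeff k (T ^ m) = (-1) ^ k * altCoeff m k := by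
  rw [altCoeff, ← mul_assoc, ← mul_pow]
  simp

lemma altCoeff_eq_sum (m k : ℕ) :
    altCoeff m k = ∑ j ∈ range (k / 2 + 1), (-1) ^ j * m.choose (k - 2 * j) * altCoeff m j := by
  have hT : T ^ m = expand 2 two_ne_zero (T ^ m) * (1 - X) ^ m := by
    rw [map_pow, ← mul_pow, mul_comm, ← T_eq_one_sub_X_mul_expand]
  rw [altCoeff, hT, coeff_mul, Nat.sum_antidiagonal_eq_sum_range_succ_mk, mul_sum,
    ← sum_range_ite_two_dvd]
  refine sum_congr rfl fun b hb => ?_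
  rw [coeff_expand, coeff_one_sub_X_pow]
  split_ifs with h
  · obtain ⟨j, rfl⟩ := h
    obtain ⟨i, rfl⟩ : ∃ i, k = 2 * j + i := ⟨k - 2 * j, by simp at hb; omega⟩
    rw [coeff_T_pow_eq_neg_one_pow_mul, Nat.mul_div_cancel_left j two_pos, Nat.add_sub_cancel_left,
      pow_add, pow_mul, neg_one_sq, one_pow, one_mul]
    have h : ((-1 : ℤ) ^ i) ^ 2 = 1 := by rw [← pow_mul, pow_mul', neg_one_sq, one_pow]
    linear_combination (altCoeff m j * m.choose i * (-1) ^ j) * h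
  · simp

lemma altCoeff_zero (m : ℕ) : altCoeff m 0 = 1 := by
  simp [altCoeff, T]

lemma altCoeff_one (m : ℕ) : altCoeff m 1 = m := by
  simp [altCoeff_eq_sum m 1, altCoeff_zero]

lemma Nat.choose_sub_two_mul {m i : ℕ} (h2i : 2 ≤ i) (him : i ≤ m) :
    m.choose (i - 2) * ((m - i + 1) * (m - i + 2)) = m.choose i * (i * (i - 1)) := by
  obtain ⟨l, rfl⟩ := Nat.exists_eq_add_of_le' h2i
  have h1 := Nat.choose_succ_right_eq m l
  have h2 := Nat.choose_succ_right_eq m (l + 1)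
  rw [show m - (l + 2) + 1 = m - (l + 1) by omega, show m - (l + 2) + 2 = m - l by omega,
    Nat.add_sub_cancel, show l + 2 - 1 = l + 1 by omega]
  calc m.choose l * ((m - (l + 1)) * (m - l))
      = m.choose l * (m - l) * (m - (l + 1)) := by ring
    _ = m.choose (l + 2) * ((l + 2) * (l + 1)) := by rw [← h1, mul_right_comm, ← h2]; ring

lemma natCast_mul_natCast_sub_one_nonneg (k : ℕ) : 0 ≤ (k : ℝ) * (k - 1) := by
  rcases k with _ | k
  · simp
  · push_cast
    simp only [add_sub_cancel_right]
    positivity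

noncomputable def chooseStepRatio (m k : ℕ) : ℝ := k * (k - 1) / ((m - k + 1) * (m - k + 2))

noncomputable def binomRatio (m k : ℕ) : ℝ := chooseStepRatio m k * m

lemma chooseStepRatio_nonneg {m k : ℕ} (hkm : k ≤ m) : 0 ≤ chooseStepRatio m k := by
  unfold chooseStepRatio
  have : (k : ℝ) ≤ m := by exact_mod_cast hkm
  have := natCast_mul_natCast_sub_one_nonneg k
  apply div_nonneg <;> nlinarith

lemma choose_sub_two_le {m k i : ℕ} (h2i : 2 ≤ i) (hik : i ≤ k) (hkm : k ≤ m) :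
    (m.choose (i - 2) : ℝ) ≤ m.choose i * chooseStepRatio m k := by
  have hid : (m.choose (i - 2) : ℝ) * ((m - i + 1) * (m - i + 2)) = m.choose i * (i * (i - 1)) := by
    have := congrArg (Nat.cast : ℕ → ℝ) (Nat.choose_sub_two_mul h2i (hik.trans hkm))
    push_cast [Nat.cast_sub (hik.trans hkm), Nat.cast_sub (one_le_two.trans h2i)] at this
    exact this
  have hE : (0 : ℝ) < (m - i + 1) * (m - i + 2) := by
    have : (i : ℝ) ≤ m := by exact_mod_cast hik.trans hkm
    nlinarith
  have hid' : (m.choose (i - 2) : ℝ) =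
      m.choose i * (i * (i - 1) / ((m - i + 1) * (m - i + 2))) := by
    rw [← mul_div_assoc, eq_div_iff hE.ne', hid]
  have hi : (2 : ℝ) ≤ i := by exact_mod_cast h2i
  have hik' : (i : ℝ) ≤ k := by exact_mod_cast hik
  have hkm' : (k : ℝ) ≤ m := by exact_mod_cast hkm
  rw [hid', chooseStepRatio]
  gcongr <;> nlinarith

lemma choose_sub_two_mul_le {m k : ℕ} (hkm : k ≤ m) {j : ℕ} (hj : 2 * j ≤ k) :
    (m.choose (k - 2 * j) : ℝ) ≤ m.choose k * chooseStepRatio m k ^ j := by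
  induction j with
  | zero => simp
  | succ j ih =>
    calc (m.choose (k - 2 * (j + 1)) : ℝ)
        = m.choose (k - 2 * j - 2) := by rw [show k - 2 * (j + 1) = k - 2 * j - 2 by omega]
      _ ≤ m.choose (k - 2 * j) * chooseStepRatio m k :=
          choose_sub_two_le (by omega) (by omega) hkm
      _ ≤ m.choose k * chooseStepRatio m k ^ j * chooseStepRatio m k := by
          gcongr
          · exact chooseStepRatio_nonneg hkm
          · exact ih (by omega)
      _ = _ := by ring

lemma choose_mul_choose_le {m k j : ℕ} (hkm : k ≤ m) (hj : 2 * j ≤ k) :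
    (m.choose (k - 2 * j) * m.choose j : ℝ) ≤ m.choose k * binomRatio m k ^ j / j ! := by
  calc (m.choose (k - 2 * j) * m.choose j : ℝ)
      ≤ m.choose k * chooseStepRatio m k ^ j * (m ^ j / j !) := by
        have := chooseStepRatio_nonneg hkm
        exact mul_le_mul (choose_sub_two_mul_le hkm hj) (Nat.choose_le_pow_div j m)
          (by positivity) (by positivity)
    _ = m.choose k * binomRatio m k ^ j / j ! := by rw [binomRatio, mul_pow]; ring

lemma binomRatio_nonneg {m k : ℕ} (hkm : k ≤ m) : 0 ≤ binomRatio m k :=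
  mul_nonneg (chooseStepRatio_nonneg hkm) m.cast_nonneg

lemma chooseStepRatio_mono {m j k : ℕ} (hjk : j ≤ k) (hkm : k ≤ m) :
    chooseStepRatio m j ≤ chooseStepRatio m k := by
  have hj : (j : ℝ) ≤ k := by exact_mod_cast hjk
  have hk : (k : ℝ) ≤ m := by exact_mod_cast hkm
  have hnum : (j : ℝ) * (j - 1) ≤ k * (k - 1) := by
    rcases j.eq_zero_or_pos with rfl | hj1
    · simpa using natCast_mul_natCast_sub_one_nonneg k
    · have : (1 : ℝ) ≤ j := by exact_mod_cast hj1
      nlinarith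
  unfold chooseStepRatio
  gcongr
  · exact natCast_mul_natCast_sub_one_nonneg k
  · nlinarith

lemma binomRatio_mono {m j k : ℕ} (hjk : j ≤ k) (hkm : k ≤ m) : binomRatio m j ≤ binomRatio m k :=
  mul_le_mul_of_nonneg_right (chooseStepRatio_mono hjk hkm) m.cast_nonneg

lemma sum_Ico_pow_div_factorial_le {x : ℝ} (hx0 : 0 ≤ x) (hx1 : x ≤ 1) {r : ℕ} (hr : 0 < r)
    (N : ℕ) : ∑ j ∈ Ico r N, x ^ j / j ! ≤ x ^ r * (r + 1) / (r ! * r) := by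
  rcases le_total r N with hrN | hNr
  · rw [sum_Ico_eq_sub _ hrN]
    linarith [Real.sum_le_exp_of_nonneg hx0 N, Real.exp_bound' hx0 hx1 hr]
  · rw [Ico_eq_empty_of_le hNr, sum_empty]
    positivity

lemma alternating_sum_bounds {a : ℕ → ℝ} {c B x : ℝ} {N : ℕ} (hN : 3 ≤ N) (hx0 : 0 ≤ x)
    (hx1 : x ≤ 1) (hB : 0 ≤ B) (ha0 : a 0 = c) (ha1 : a 1 ≤ c * x) (ha : ∀ j, 1 ≤ j → 0 ≤ a j)
    (haB : ∀ j, 2 ≤ j → a j ≤ B * (x ^ j / j !)) :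
    c - c * x - 2 / 9 * B * x ^ 3 ≤ ∑ j ∈ range N, (-1) ^ j * a j ∧
      ∑ j ∈ range N, (-1) ^ j * a j ≤ c + B * x ^ 2 / 2 + 2 / 9 * B * x ^ 3 := by
  have hsplit : ∑ j ∈ range N, (-1) ^ j * a j
      = a 0 - a 1 + a 2 + ∑ j ∈ Ico 3 N, (-1) ^ j * a j := by
    rw [← sum_range_add_sum_Ico _ hN]
    simp [sum_range_succ, sub_eq_add_neg]
  have htail : |∑ j ∈ Ico 3 N, (-1) ^ j * a j| ≤ 2 / 9 * B * x ^ 3 :=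
    calc |∑ j ∈ Ico 3 N, (-1) ^ j * a j|
        ≤ ∑ j ∈ Ico 3 N, a j := by
          refine (abs_sum_le_sum_abs _ _).trans (le_of_eq (sum_congr rfl fun j hj => ?_))
          rw [abs_mul, abs_pow, abs_neg, abs_one, one_pow, one_mul,
            abs_of_nonneg (ha j (by simp at hj; omega))]
      _ ≤ B * ∑ j ∈ Ico 3 N, x ^ j / j ! := by
          rw [mul_sum]
          exact sum_le_sum fun j hj => haB j (by simp at hj; omega)
      _ ≤ B * (x ^ 3 * (3 + 1) / (3 ! * 3)) :=
          mul_le_mul_of_nonneg_left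
            (by exact_mod_cast sum_Ico_pow_div_factorial_le hx0 hx1 three_pos N) hB
      _ = 2 / 9 * B * x ^ 3 := by norm_num [Nat.factorial]; ring
  have ha2 : a 2 ≤ B * x ^ 2 / 2 := by simpa [mul_div_assoc] using haB 2 le_rfl
  rw [hsplit]
  have := abs_le.1 htail
  constructor <;> linarith [ha 1 le_rfl, ha 2 one_le_two]

lemma binomRatio_le_three_quarters {m n : ℕ} (hnm : n ≤ m) (h : (n : ℝ) ^ 2 < 7 / 10 * m) :
    binomRatio m n ≤ 3 / 4 := by
  have hn : (n : ℝ) ≤ m := by exact_mod_cast hnm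
  have hn0 : (0 : ℝ) ≤ n := n.cast_nonneg
  rw [binomRatio, chooseStepRatio, div_mul_eq_mul_div, div_le_iff₀ (by nlinarith)]
  nlinarith [sq_nonneg ((n : ℝ) - 7 / 2), mul_pos (sub_pos.2 h) (sub_pos.2 h)]

lemma altCoeff_bounds {m k : ℕ} {b : ℝ} (hkm : k ≤ m) (hQ : binomRatio m k ≤ 1) (hb : 0 ≤ b)
    (hind : ∀ j, 1 ≤ j → 2 * j ≤ k → 0 ≤ (altCoeff m j : ℝ) ∧ (altCoeff m j : ℝ) ≤ b * m.choose j) :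
    m.choose k * (1 - binomRatio m k - 2 / 9 * b * binomRatio m k ^ 3) ≤ altCoeff m k ∧
      (altCoeff m k : ℝ) ≤
        m.choose k * (1 + b * binomRatio m k ^ 2 / 2 + 2 / 9 * b * binomRatio m k ^ 3) := by
  -- padded with zeros, so that the sum has the three leading terms `alternating_sum_bounds` needs
  set a : ℕ → ℝ := fun j => if 2 * j ≤ k then m.choose (k - 2 * j) * altCoeff m j else 0
  have hrec : (altCoeff m k : ℝ) = ∑ j ∈ range (k / 2 + 3), (-1) ^ j * a j := by
    rw [altCoeff_eq_sum]
    push_cast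
    apply sum_subset_zero_on_sdiff (range_subset_range.2 (by omega))
    · intro j hj
      simp only [mem_sdiff, mem_range] at hj
      simp only [a, if_neg (show ¬ 2 * j ≤ k by omega), mul_zero]
    · intro j hj
      simp only [mem_range] at hj
      simp only [a, if_pos (show 2 * j ≤ k by omega)]
      ring
  have ha_le : ∀ j, 1 ≤ j → a j ≤ b * m.choose k * (binomRatio m k ^ j / j !) := by
    intro j hj
    simp only [a]
    split_ifs with h2j
    · calc (m.choose (k - 2 * j) : ℝ) * altCoeff m j
          ≤ m.choose (k - 2 * j) * (b * m.choose j) :=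
            mul_le_mul_of_nonneg_left (hind j hj h2j).2 (by positivity)
        _ ≤ b * (m.choose k * binomRatio m k ^ j / j !) := by
            rw [mul_left_comm]
            exact mul_le_mul_of_nonneg_left (choose_mul_choose_le hkm h2j) hb
        _ = _ := by ring
    · have := binomRatio_nonneg hkm
      positivity
  have ha1 : a 1 ≤ m.choose k * binomRatio m k := by
    simp only [a, altCoeff_one]
    split_ifs with h2
    · simpa [Nat.choose_one_right] using choose_mul_choose_le hkm h2
    · have := binomRatio_nonneg hkm
      positivity
  have ha_nonneg : ∀ j, 1 ≤ j → 0 ≤ a j := by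
    intro j hj
    simp only [a]
    split_ifs with h2j
    · exact mul_nonneg (by positivity) (hind j hj h2j).1
    · rfl
  obtain ⟨hlow, hup⟩ := alternating_sum_bounds (N := k / 2 + 3) (by omega)
    (binomRatio_nonneg hkm) hQ (by positivity) (by simp [a, altCoeff_zero]) ha1 ha_nonneg
    (fun j hj => ha_le j (by omega))
  rw [hrec]
  constructor
  · linarith
  · linarith

lemma altCoeff_mem_Ioc {m k : ℕ} (hkm : k ≤ m) (hQ : binomRatio m k ≤ 3 / 4) :
    (altCoeff m k : ℝ) ∈ Set.Ioc 0 (2 * (m.choose k : ℝ)) := by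
  induction k using Nat.strong_induction_on with
  | _ k ih =>
  have hind : ∀ j, 1 ≤ j → 2 * j ≤ k →
      0 ≤ (altCoeff m j : ℝ) ∧ (altCoeff m j : ℝ) ≤ 2 * m.choose j := by
    intro j hj h2j
    have hjk : j ≤ k := by omega
    obtain ⟨hpos, hle⟩ := ih j (by omega) (hjk.trans hkm) ((binomRatio_mono hjk hkm).trans hQ)
    exact ⟨hpos.le, hle⟩
  obtain ⟨hlow, hup⟩ := altCoeff_bounds hkm (hQ.trans (by norm_num)) zero_le_two hind
  have hC : (0 : ℝ) < m.choose k := by exact_mod_cast Nat.choose_pos hkm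
  have hQ0 := binomRatio_nonneg hkm
  have hQ2 : binomRatio m k ^ 2 ≤ (3 / 4) ^ 2 := pow_le_pow_left₀ hQ0 hQ 2
  have hQ3 : binomRatio m k ^ 3 ≤ (3 / 4) ^ 3 := pow_le_pow_left₀ hQ0 hQ 3
  refine ⟨(mul_pos hC (by linarith)).trans_le hlow, hup.trans ?_⟩
  rw [mul_comm]
  exact mul_le_mul_of_nonneg_right (by linarith) hC.le

theorem stmt19_general (m : ℕ) (n : ℕ)
    (h : (n : ℝ) ^ 2 / Real.log 2 < (m : ℝ)) :
    PowerSeries.coeff n (T ^ m) ≠ 0 := by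
  have hlog : Real.log 2 < 7 / 10 := Real.log_two_lt_d9.trans (by norm_num)
  have hm0 : (0 : ℝ) ≤ m := m.cast_nonneg
  have hn : (n : ℝ) ^ 2 < 7 / 10 * m := by
    rw [div_lt_iff₀ (Real.log_pos one_lt_two)] at h
    nlinarith
  have hnm : n ≤ m := by
    have : (n : ℝ) ≤ n ^ 2 := by exact_mod_cast Nat.le_self_pow two_ne_zero n
    exact_mod_cast (show (n : ℝ) ≤ m by linarith)
  have hpos := (altCoeff_mem_Ioc hnm (binomRatio_le_three_quarters hnm hn)).1
  rw [coeff_T_pow_eq_neg_one_pow_mul]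
  exact mul_ne_zero (pow_ne_zero _ (by norm_num)) (by exact_mod_cast hpos.ne')

theorem stmt19 (m : ℕ) (hm : 1 ≤ m) (n : ℕ)
    (h : (n : ℝ) ^ 2 / Real.log 2 < (m : ℝ)) :
    PowerSeries.coeff n (T ^ m) ≠ 0 :=
  stmt19_general m n h
end
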